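/- Let n ≥ 2 and f = y² + A(x)·y + B(x) ∈ ℂ{x}[y] with ord(A) ≥ 1, ord(B) ≥ 2, and suppose A²/4 − B = x^k·u(x) with k ≥ 2 and u(x) ∈ ℂ{x} a unit. Then ω₁ := 2x·dy − ((k + x·u'(x)/u(x))·(y + A/2) − x·A')·dx and ω₂ := df = (2y + A)·dy + (A'·y + B')·dx satisfy ω₁ ∧ ω₂ = −2·(k + x·u'(x)/u(x))·f·dx∧dy; since k + x·u'/u is a unit, {ω₁, ω₂} is a Saito basis of S(f). -/

import Mathlib

/-
Write `Δ = A² - 4B = 4xᵏU`, so that `f = (y + A/2)² - Δ/4`. Since `U` is a unit, the Euler-type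
identity `x·∂ₓΔ = (k + x·U'/U)·Δ = K·Δ` holds, i.e. `x·(2AA' - 4B') = K·Δ`. Expanding the wedge
product and substituting this identity gives `ω₁ ∧ df = -2K·f`. As `K` has constant term `k ≠ 0`,
it is a unit, and `df ∧ df = 0` puts `df` in the Saito module as well.
-/

open MvPowerSeries

noncomputable section

/-- `ℂ{x,y}`, modeled as formal power series in two variables. -/
abbrev PS := MvPowerSeries (Fin 2) ℂ

/-- Formal partial derivative with respect to variable `i`. -/
noncomputable def pd (i : Fin 2) (f : PS) : PS :=
  fun m => ((m i : ℂ) + 1) * MvPowerSeries.coeff (R := ℂ) (m + Finsupp.single i 1) f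

/-- The pair `(f_x, f_y)` representing the differential `df = f_x dx + f_y dy`;
a 1-form `A dx + B dy` is modeled as the pair `(A, B)`. -/
noncomputable def dd (f : PS) : PS × PS := (pd 0 f, pd 1 f)

/-- `(A dx + B dy) ∧ (C dx + D dy) = (A D - B C) dx∧dy`, recorded by its coefficient. -/
def wedge (ω η : PS × PS) : PS := ω.1 * η.2 - ω.2 * η.1

/-- The Saito module `S(f)`: 1-forms `ω` with `ω ∧ df = h·f·dx∧dy` for some `h`. -/
def SaitoSet (f : PS) : Set (PS × PS) := {ω | ∃ h : PS, wedge ω (dd f) = h * f}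

/-- `F(f) = ℂ{x,y}·df + f·Ω¹`. -/
def FSet (f : PS) : Set (PS × PS) := {ω | ∃ (p : PS) (η : PS × PS), ω = p • dd f + f • η}

/-- A power series involving only the variable `x`. -/
def OnlyX (p : PS) : Prop :=
  ∀ m : Fin 2 →₀ ℕ, m 1 ≠ 0 → MvPowerSeries.coeff (R := ℂ) m p = 0

@[simp]
theorem Derivation.map_ofNat {R S M : Type*} [CommSemiring R] [CommSemiring S] [AddCommMonoid M]
    [Algebra R S] [Module S M] [Module R M] (D : Derivation R S M) (n : ℕ) [n.AtLeastTwo] :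
    D (no_index (OfNat.ofNat n : S)) = 0 :=
  D.map_natCast n

theorem Derivation.self_mul_apply_pow_mul {R S : Type*} [CommSemiring R] [CommRing S] [Algebra R S]
    (D : Derivation R S S) {x u v : S} (hx : D x = 1) (huv : u * v = 1) (k : ℕ) :
    x * D (x ^ k * u) = (k + x * D u * v) * (x ^ k * u) := by
  rcases k with _ | k
  · simp only [pow_zero, one_mul, Nat.cast_zero, zero_add]
    linear_combination (-(x * D u)) * huv
  · simp only [D.leibniz, D.leibniz_pow, hx, smul_eq_mul, nsmul_eq_mul, Nat.add_sub_cancel]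
    push_cast
    linear_combination (-(x ^ (k + 2) * D u)) * huv

theorem MvPowerSeries.isUnit_natCast_add_X_mul {σ R : Type*} [Field R] [CharZero R] (i : σ)
    (g : MvPowerSeries σ R) {k : ℕ} (hk : k ≠ 0) :
    IsUnit ((k : MvPowerSeries σ R) + X i * g) := by
  rw [isUnit_iff_constantCoeff]
  simpa using hk

theorem pd_eq_pderiv (i : Fin 2) (f : PS) : pd i f = pderiv ℂ i f := by
  ext m
  rw [coeff_pderiv]
  exact mul_comm _ _

theorem OnlyX.pderiv_eq_zero {p : PS} (hp : OnlyX p) : pderiv ℂ 1 p = 0 := by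
  ext m
  rw [coeff_pderiv, hp _ (by simp), zero_mul, map_zero]

theorem dd_quadratic {A B : PS} (hA : OnlyX A) (hB : OnlyX B) :
    dd (X 1 ^ 2 + A * X 1 + B) = (pderiv ℂ 0 A * X 1 + pderiv ℂ 0 B, 2 * X 1 + A) := by
  simp only [dd, pd_eq_pderiv, map_add, Derivation.leibniz, Derivation.leibniz_pow,
    pderiv_X_self, pderiv_X_of_ne (show (1 : Fin 2) ≠ 0 by decide), hA.pderiv_eq_zero,
    hB.pderiv_eq_zero, smul_eq_mul, nsmul_eq_mul, Nat.reduceSub, Prod.mk.injEq]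
  constructor <;> ring

theorem wedge_self (ω : PS × PS) : wedge ω ω = 0 := by
  rw [wedge, mul_comm, sub_self]

theorem dd_mem_saitoSet (f : PS) : dd f ∈ SaitoSet f :=
  ⟨0, by rw [wedge_self, zero_mul]⟩

theorem wedge_eq_neg_two_mul_quadratic (D : Derivation ℂ PS PS) {x y A B K c : PS}
    (hc : 2 * c = 1) (hΔ : x * D (A ^ 2 - 4 * B) = K * (A ^ 2 - 4 * B)) :
    wedge (-(K * (y + c * A) - x * D A), 2 * x) (D A * y + D B, 2 * y + A) =
      -2 * K * (y ^ 2 + A * y + B) := by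
  simp only [map_sub, D.leibniz, D.leibniz_pow, Derivation.map_ofNat, smul_eq_mul,
    nsmul_eq_mul] at hΔ
  rw [wedge]
  linear_combination c * hΔ - (K * A * y + 2 * K * B + x * A * D A - 2 * x * D B) * hc

theorem multiplicity_two_saito_basis_general
    (A B U V : PS) (hA : OnlyX A) (hB : OnlyX B)
    (k : ℕ) (hk : 2 ≤ k) (hUV : U * V = 1)
    (f : PS) (hfdef : f = (X 1 : PS) ^ 2 + A * X 1 + B)
    (hdisc : A ^ 2 - 4 * B = 4 * (X 0 : PS) ^ k * U)
    (K : PS) (hK : K = (k : PS) + (X 0 : PS) * pd 0 U * V) :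
    wedge (-(K * ((X 1 : PS) + MvPowerSeries.C (σ := Fin 2) (R := ℂ) (1/2) * A) - X 0 * pd 0 A),
            2 * (X 0 : PS))
          (pd 0 A * X 1 + pd 0 B, 2 * (X 1 : PS) + A) = -2 * K * f ∧
    IsUnit K ∧
    (-(K * ((X 1 : PS) + MvPowerSeries.C (σ := Fin 2) (R := ℂ) (1/2) * A) - X 0 * pd 0 A),
      2 * (X 0 : PS)) ∈ SaitoSet f ∧
    ((pd 0 A * X 1 + pd 0 B, 2 * (X 1 : PS) + A) : PS × PS) ∈ SaitoSet f := by
  simp only [pd_eq_pderiv] at hK ⊢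
  have hdf : dd f = (pderiv ℂ 0 A * X 1 + pderiv ℂ 0 B, 2 * X 1 + A) := hfdef ▸ dd_quadratic hA hB
  have hΔ : X 0 * pderiv ℂ 0 (A ^ 2 - 4 * B) = K * (A ^ 2 - 4 * B) := by
    have := (pderiv ℂ 0).self_mul_apply_pow_mul pderiv_X_self hUV k
    rw [hdisc, mul_assoc (4 : PS), Derivation.leibniz, Derivation.map_ofNat, smul_zero, add_zero,
      smul_eq_mul, hK]
    linear_combination 4 * this
  have hc : (2 : PS) * C (1 / 2) = 1 := by
    rw [← map_ofNat C 2, ← map_mul]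
    norm_num
  have hwedge := hfdef ▸ wedge_eq_neg_two_mul_quadratic (pderiv ℂ 0) hc hΔ
  have hKunit : IsUnit K := by
    rw [hK, mul_assoc]
    exact isUnit_natCast_add_X_mul 0 _ (by omega)
  exact ⟨hwedge, hKunit, ⟨-2 * K, hdf ▸ hwedge⟩, hdf ▸ dd_mem_saitoSet f⟩

theorem multiplicity_two_saito_basis (n : ℕ) (hn : 2 ≤ n)
    (A B U V : PS) (hA : OnlyX A) (hB : OnlyX B) (hU : OnlyX U)
    (hordA : MvPowerSeries.constantCoeff (σ := Fin 2) (R := ℂ) A = 0)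
    (hordB : MvPowerSeries.constantCoeff (σ := Fin 2) (R := ℂ) B = 0 ∧
      MvPowerSeries.coeff (R := ℂ) (Finsupp.single (0 : Fin 2) 1) B = 0)
    (k : ℕ) (hk : 2 ≤ k) (hUu : IsUnit U) (hUV : U * V = 1)
    (f : PS) (hfdef : f = (X 1 : PS) ^ 2 + A * X 1 + B)
    (hdisc : A ^ 2 - 4 * B = 4 * (X 0 : PS) ^ k * U)
    (K : PS) (hK : K = (k : PS) + (X 0 : PS) * pd 0 U * V) :
    wedge (-(K * ((X 1 : PS) + MvPowerSeries.C (σ := Fin 2) (R := ℂ) (1/2) * A) - X 0 * pd 0 A),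
            2 * (X 0 : PS))
          (pd 0 A * X 1 + pd 0 B, 2 * (X 1 : PS) + A) = -2 * K * f ∧
    IsUnit K ∧
    (-(K * ((X 1 : PS) + MvPowerSeries.C (σ := Fin 2) (R := ℂ) (1/2) * A) - X 0 * pd 0 A),
      2 * (X 0 : PS)) ∈ SaitoSet f ∧
    ((pd 0 A * X 1 + pd 0 B, 2 * (X 1 : PS) + A) : PS × PS) ∈ SaitoSet f :=
  multiplicity_two_saito_basis_general A B U V hA hB k hk hUV f hfdef hdisc K hK
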